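/- Limit of the Q-approximated probability of a positive result in Example 2: in the Example 2 setting, ψ_{Q,n} → Φ( a/√0.96 − z_{0.9} ) as n → ∞ (along even n), where Φ is the standard normal cumulative distribution function and 0.96 = 4·(0.4)·(0.6). -/

import Mathlib

/-! The centre difference `C₁ - C₀` is a difference of independent Gaussians, hence Gaussian with
mean `ω_{1,n} - 0.4 = a / √n` and variance `v_n`. Once `ω_{1,n} ∈ (0, 1)` this gives exactly
`ψ_{Q,n} = Φ(a / √(n v_n) - z)`, and `n v_n = 2 (0.24 + ω_{1,n} (1 - ω_{1,n})) → 0.96`;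
the limit follows from continuity of `Φ`, the cdf of an atomless law. -/

open MeasureTheory ProbabilityTheory Filter Set
open scoped Classical ENNReal NNReal

noncomputable section

/-- The treatment-arm response probability `ω_{1,n} = 0.4 + a·n^{-1/2}` with total
sample size `n = 2m` (per-arm sample size `m`). -/
def omega1 (a : ℝ) (m : ℕ) : ℝ := 0.4 + a / Real.sqrt (2 * m)

/-- The bivariate normal distribution `f_n` of the center `C = (C₀, C₁)`:
mean `(ω_{0,n}, ω_{1,n})` and diagonal covariance with entries `ω_{k,n}(1−ω_{k,n})/(n/2)`. -/
def fQ (a : ℝ) (m : ℕ) : Measure (ℝ × ℝ) :=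
  (gaussianReal 0.4 (Real.toNNReal (0.4 * (1 - 0.4) / m))).prod
    (gaussianReal (omega1 a m) (Real.toNNReal (omega1 a m * (1 - omega1 a m) / m)))

/-- `v_n = [ω_{0,n}(1−ω_{0,n}) + ω_{1,n}(1−ω_{1,n})]·(2/n)`, the Q-posterior variance of
`δ = θ₁ − θ₀`. -/
def vQ (a : ℝ) (m : ℕ) : ℝ :=
  (0.4 * (1 - 0.4) + omega1 a m * (1 - omega1 a m)) * (2 / (2 * m))

/-- `ψ_{Q,n} = P(C₁ − C₀ ≥ z_{0.9}·√v_n)` under `C ~ f_n`. -/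
def psiQ (a : ℝ) (m : ℕ) (z : ℝ) : ℝ :=
  ((fQ a m) {c : ℝ × ℝ | z * Real.sqrt (vQ a m) ≤ c.2 - c.1}).toReal

/-- The standard normal CDF `Φ`. -/
def stdNormCDF (x : ℝ) : ℝ := ((gaussianReal 0 1) (Set.Iic x)).toReal

open Real Topology

theorem StieltjesFunction.continuous_of_nullSingletonClass (f : StieltjesFunction ℝ)
    [NullSingletonClass f.measure] : Continuous f := by
  refine continuous_iff_continuousAt.2 fun x => ?_
  rw [f.mono.continuousAt_iff_leftLim_eq_rightLim, f.rightLim_eq]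
  have h := f.measure_singleton x
  rw [MeasureTheory.measure_singleton, eq_comm, ENNReal.ofReal_eq_zero, sub_nonpos] at h
  exact le_antisymm (f.mono.leftLim_le le_rfl) h

theorem ProbabilityTheory.continuous_cdf (μ : Measure ℝ) [IsProbabilityMeasure μ]
    [NullSingletonClass μ] : Continuous (cdf μ) := by
  have : NullSingletonClass (cdf μ).measure := by rw [measure_cdf]; infer_instance
  exact (cdf μ).continuous_of_nullSingletonClass

theorem stdNormCDF_eq_cdf : stdNormCDF = cdf (gaussianReal 0 1) := by
  ext x
  rw [cdf_eq_real, measureReal_def, stdNormCDF]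

theorem continuous_stdNormCDF : Continuous stdNormCDF := by
  have := nullSingletonClass_gaussianReal (μ := 0) one_ne_zero
  rw [stdNormCDF_eq_cdf]
  exact continuous_cdf _

theorem gaussianReal_prod_map_sub (m₁ m₂ : ℝ) (v₁ v₂ : ℝ≥0) :
    ((gaussianReal m₁ v₁).prod (gaussianReal m₂ v₂)).map (fun p => p.2 - p.1)
      = gaussianReal (m₂ - m₁) (v₁ + v₂) := by
  have hsub : (fun p : ℝ × ℝ => p.2 - p.1)
      = (fun q : ℝ × ℝ => q.1 + q.2) ∘ Prod.map Neg.neg id := by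
    ext p
    simp [neg_add_eq_sub]
  rw [hsub, ← Measure.map_map (by fun_prop) (by fun_prop), ← Measure.map_prod_map _ _
    (by fun_prop) measurable_id, gaussianReal_map_neg, Measure.map_id, ← Measure.conv,
    gaussianReal_conv_gaussianReal, neg_add_eq_sub]

theorem gaussianReal_prod_apply_le_sub (m₁ m₂ t : ℝ) (v₁ v₂ : ℝ≥0) :
    ((gaussianReal m₁ v₁).prod (gaussianReal m₂ v₂)) {p : ℝ × ℝ | t ≤ p.2 - p.1}
      = gaussianReal (m₂ - m₁) (v₁ + v₂) (Ici t) := by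
  rw [← gaussianReal_prod_map_sub, Measure.map_apply (by fun_prop) measurableSet_Ici]
  rfl

theorem gaussianReal_Ici_toReal (m t : ℝ) {v : ℝ≥0} (hv : v ≠ 0) :
    (gaussianReal m v (Ici t)).toReal = stdNormCDF ((m - t) / √v) := by
  have hσ : 0 < √(v : ℝ) := Real.sqrt_pos.2 (by positivity)
  have hstd : (gaussianReal 0 1).map (fun x => m - √v * x) = gaussianReal m v := by
    rw [show (fun x => m - √v * x) = (m - ·) ∘ (√v * ·) from rfl,
      ← Measure.map_map (by fun_prop) (by fun_prop), gaussianReal_map_const_mul,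
      gaussianReal_map_const_sub]
    simp
  have hpre : (fun x => m - √v * x) ⁻¹' Ici t = Iic ((m - t) / √v) := by
    ext x
    simp only [mem_preimage, mem_Ici, mem_Iic, le_div_iff₀ hσ]
    constructor <;> intro h <;> linarith
  rw [← hstd, Measure.map_apply (by fun_prop) measurableSet_Ici, hpre, stdNormCDF]

theorem tendsto_omega1 (a : ℝ) : Tendsto (fun m : ℕ => omega1 a m) atTop (𝓝 0.4) := by
  have h : Tendsto (fun m : ℕ => a / √(2 * m)) atTop (𝓝 0) :=
    tendsto_const_nhds.div_atTop (tendsto_sqrt_atTop.comp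
      ((tendsto_natCast_atTop_atTop (R := ℝ)).const_mul_atTop two_pos))
  simpa [omega1] using h.const_add (0.4 : ℝ)

-- `fQ` clamps a negative variance to `0` through `Real.toNNReal`, hence `hω`.
theorem psiQ_eq_stdNormCDF (a z : ℝ) {m : ℕ} (hm : 0 < m)
    (hω : 0 ≤ omega1 a m * (1 - omega1 a m)) :
    psiQ a m z
      = stdNormCDF (a / √(2 * (0.4 * (1 - 0.4) + omega1 a m * (1 - omega1 a m))) - z) := by
  have hm' : (0 : ℝ) < m := by exact_mod_cast hm
  have hv : Real.toNNReal (0.4 * (1 - 0.4) / m)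
      + Real.toNNReal (omega1 a m * (1 - omega1 a m) / m) = Real.toNNReal (vQ a m) := by
    rw [← Real.toNNReal_add (by positivity) (by positivity), vQ]
    congr 1
    field_simp
  have hvQ : 0 < vQ a m := by unfold vQ; positivity
  have hσ : √(2 * (0.4 * (1 - 0.4) + omega1 a m * (1 - omega1 a m)))
      = √(2 * m) * √(vQ a m) := by
    rw [← Real.sqrt_mul (by positivity), vQ]
    congr 1
    field_simp
  rw [psiQ, fQ, gaussianReal_prod_apply_le_sub, hv,
    gaussianReal_Ici_toReal _ _ (by simpa using hvQ), Real.coe_toNNReal _ hvQ.le, hσ, omega1]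
  have hσ' : 0 < √(vQ a m) := Real.sqrt_pos.2 hvQ
  congr 1
  field_simp
  ring

theorem psiQ_limit_general
    (a z : ℝ) :
    Tendsto (fun m : ℕ => psiQ a m z) atTop
      (nhds (stdNormCDF (a / Real.sqrt 0.96 - z))) := by
  have hvar :
      Tendsto (fun m : ℕ => omega1 a m * (1 - omega1 a m)) atTop (𝓝 (0.4 * (1 - 0.4))) :=
    (tendsto_omega1 a).mul (tendsto_const_nhds.sub (tendsto_omega1 a))
  have hlim : Tendsto (fun m : ℕ =>
      stdNormCDF (a / √(2 * (0.4 * (1 - 0.4) + omega1 a m * (1 - omega1 a m))) - z)) atTop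
      (𝓝 (stdNormCDF (a / √0.96 - z))) := by
    have h : Tendsto (fun m : ℕ => √(2 * (0.4 * (1 - 0.4) + omega1 a m * (1 - omega1 a m))))
        atTop (𝓝 √0.96) := by
      convert ((tendsto_const_nhds.add hvar).const_mul 2).sqrt using 2
      norm_num
    exact (continuous_stdNormCDF.tendsto _).comp
      ((tendsto_const_nhds.div h (by positivity)).sub_const z)
  refine hlim.congr' ?_
  have hvar_pos : (0 : ℝ) < 0.4 * (1 - 0.4) := by norm_num
  filter_upwards [eventually_gt_atTop 0, hvar.eventually (eventually_gt_nhds hvar_pos)]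
    with m hm hω
  exact (psiQ_eq_stdNormCDF a z hm hω.le).symm

/-- **Limit of `ψ_{Q,n}` in Example 2**: as `n → ∞` (along even `n = 2m`),
`ψ_{Q,n} → Φ( a/√0.96 − z_{0.9} )`, where `0.96 = 4·(0.4)·(0.6)`. -/
theorem psiQ_limit
    (a z : ℝ) (ha : 0 < a) (hz : stdNormCDF z = 0.9) :
    Tendsto (fun m : ℕ => psiQ a m z) atTop
      (nhds (stdNormCDF (a / Real.sqrt 0.96 - z))) :=
  psiQ_limit_general a z

end
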